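/- Semantic application is type sound: if 𝐟 = ((n, f^c), f^s) belongs to ⟦σ ⇒ τ⟧ and 𝐱 = ((m, g^c), g^s) belongs to ⟦σ⟧, then 𝐟 · 𝐱 := ((n + m + k, h), f^s(g^s)), where (k, h) = f^c(g^c, g^s), belongs to ⟦τ⟧. -/
import Mathlib


/-- A carrier type together with a quasi-order. -/
structure QO where
  α : Type
  ge : α → α → Prop

/-- Simple types over a set `B` of base types. -/
inductive Ty (B : Type) : Type
  | base : B → Ty B
  | arrow : Ty B → Ty B → Ty B

/-- Raw (not-necessarily-monotone) cost-functional and size spaces with their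
pointwise quasi-orders: `F_ι = unit`, `S_ι = ℕ^{K ι}`, and for arrow types the
full function spaces `F_σ × S_σ → ℕ × F_τ` and `S_σ → S_τ`. -/
def RawFS {B : Type} (K : B → ℕ) : Ty B → QO × QO
  | .base b =>
      (⟨PUnit, fun _ _ => True⟩, ⟨Fin (K b) → ℕ, fun x y => ∀ i, x i ≥ y i⟩)
  | .arrow σ τ =>
      (⟨(RawFS K σ).1.α × (RawFS K σ).2.α → ℕ × (RawFS K τ).1.α,
        fun f g => ∀ x, (f x).1 ≥ (g x).1 ∧ (RawFS K τ).1.ge (f x).2 (g x).2⟩,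
       ⟨(RawFS K σ).2.α → (RawFS K τ).2.α,
        fun f g => ∀ x, (RawFS K τ).2.ge (f x) (g x)⟩)

/-- The predicates carving out the actual interpretation domains `F_σ` and
`S_σ` inside the raw spaces: at arrow types, membership requires weak
monotonicity and mapping good arguments to good results. -/
def Good {B : Type} (K : B → ℕ) :
    (σ : Ty B) → ((RawFS K σ).1.α → Prop) × ((RawFS K σ).2.α → Prop)
  | .base _ => (fun _ => True, fun _ => True)
  | .arrow σ τ =>
      (fun f =>
        (∀ x y, (RawFS K σ).1.ge x.1 y.1 → (RawFS K σ).2.ge x.2 y.2 →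
          (f x).1 ≥ (f y).1 ∧ (RawFS K τ).1.ge (f x).2 (f y).2) ∧
        (∀ x, (Good K σ).1 x.1 → (Good K σ).2 x.2 → (Good K τ).1 (f x).2),
       fun f =>
        (∀ x y, (RawFS K σ).2.ge x y → (RawFS K τ).2.ge (f x) (f y)) ∧
        (∀ x, (Good K σ).2 x → (Good K τ).2 (f x)))

/-- The raw interpretation domain `(ℕ × F_σ) × S_σ`. -/
def RawInterp {B : Type} (K : B → ℕ) (σ : Ty B) : Type :=
  (ℕ × (RawFS K σ).1.α) × (RawFS K σ).2.α

/-- Membership of a cost-size tuple in `⟦σ⟧`. -/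
def InInterp {B : Type} (K : B → ℕ) (σ : Ty B) (x : RawInterp K σ) : Prop :=
  (Good K σ).1 x.1.2 ∧ (Good K σ).2 x.2

/-- Semantic application `((n,f^c),f^s) · ((m,g^c),g^s) = ((n+m+k,h), f^s(g^s))`
where `(k,h) = f^c(g^c,g^s)`. -/
def semApp {B : Type} (K : B → ℕ) {σ τ : Ty B}
    (f : RawInterp K (Ty.arrow σ τ)) (x : RawInterp K σ) : RawInterp K τ :=
  let kh : ℕ × (RawFS K τ).1.α := f.1.2 (x.1.2, x.2)
  ((f.1.1 + x.1.1 + kh.1, kh.2), f.2 x.2)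

/-- semantic application is type sound: if `𝐟` belongs to
`⟦σ ⇒ τ⟧` and `𝐱` belongs to `⟦σ⟧`, then `𝐟 · 𝐱` belongs to `⟦τ⟧`. -/
theorem semApp_type_sound
    (B : Type) (K : B → ℕ) (σ τ : Ty B)
    (f : RawInterp K (Ty.arrow σ τ)) (x : RawInterp K σ)
    (hf : InInterp K (Ty.arrow σ τ) f) (hx : InInterp K σ x) :
    InInterp K τ (semApp K f x) := by
  obtain ⟨⟨_, hfc⟩, _, hfs⟩ := hf
  exact ⟨hfc (x.1.2, x.2) hx.1 hx.2, hfs x.2 hx.2⟩
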